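/- arXiv:1612.00930 — 6 statements merged into one kernel-verified Lean document; each statement's English description precedes it below -/
import Mathlib

section
/- For a finite group G, an element g ∈ G, a complex vector space V, a representation λ : C_G(g) → GL(V), and a group homomorphism η from the additive group ℝ to ℂˣ satisfying λ(g) = η(1)·id_V, the assignment [h, t] ↦ η(t)·λ(h) is a well-defined group homomorphism Λ_G(g) → GL(V) (denoted λ⊙η). -/
noncomputable section

/-- The element `g` as an element of its own centralizer. -/
def gElem {G : Type} [Group G] (g : G) : Subgroup.centralizer ({g} : Set G) :=
  ⟨g, by rw [Subgroup.mem_centralizer_iff]; rintro h rfl; rfl⟩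

/-- The central element `(g, -k)` of `C_G(g) × ℝ`. -/
def zElem {G : Type} [Group G] (g : G) (k : ℤ) :
    Subgroup.centralizer ({g} : Set G) × Multiplicative ℝ :=
  (gElem g, Multiplicative.ofAdd (-(k : ℝ)))

theorem zElem_comm {G : Type} [Group G] (g : G) (k : ℤ)
    (x : Subgroup.centralizer ({g} : Set G) × Multiplicative ℝ) :
    Commute x (zElem g k) := by
  have h1 : x.1 * gElem g = gElem g * x.1 := by
    apply Subtype.ext
    exact (Subgroup.mem_centralizer_iff.mp x.1.2 g rfl).symm
  exact Prod.ext h1 (mul_comm _ _)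

/-- The subgroup of `C_G(g) × ℝ` generated by `(g, -k)`. -/
def lambdaRel {G : Type} [Group G] (g : G) (k : ℤ) :
    Subgroup (Subgroup.centralizer ({g} : Set G) × Multiplicative ℝ) :=
  Subgroup.zpowers (zElem g k)

instance lambdaRel_normal {G : Type} [Group G] (g : G) (k : ℤ) : (lambdaRel g k).Normal := by
  constructor
  intro n hn x
  rw [lambdaRel, Subgroup.mem_zpowers_iff] at hn
  obtain ⟨m, rfl⟩ := hn
  have h := ((zElem_comm g k x).zpow_right m).eq
  rw [h, mul_inv_cancel_right]
  exact Subgroup.zpow_mem_zpowers _ m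

/-- The group `Λ^k_G(g) = (C_G(g) × ℝ)/⟨(g,-k)⟩`. -/
def LambdaK (G : Type) [Group G] (g : G) (k : ℤ) : Type :=
  (Subgroup.centralizer ({g} : Set G) × Multiplicative ℝ) ⧸ lambdaRel g k

instance (G : Type) [Group G] (g : G) (k : ℤ) : Group (LambdaK G g k) :=
  inferInstanceAs (Group ((Subgroup.centralizer ({g} : Set G) × Multiplicative ℝ) ⧸ lambdaRel g k))

/-- The group `Λ_G(g) = (C_G(g) × ℝ)/⟨(g,-1)⟩`. -/
abbrev Lambda (G : Type) [Group G] (g : G) : Type := LambdaK G g 1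

/-- The class `[h, t]` in `Λ^k_G(g)`. -/
def lmk {G : Type} [Group G] {g : G} {k : ℤ} (h : Subgroup.centralizer ({g} : Set G))
    (t : ℝ) : LambdaK G g k :=
  QuotientGroup.mk (h, Multiplicative.ofAdd t)

end
/-- Given a representation `λ` of `C_G(g)` on a complex vector space `V`
and a homomorphism `η : ℝ → ℂˣ` with `λ(g) = η(1)·id`, the assignment
`[h, t] ↦ η(t) • λ(h)` is a well-defined group homomorphism `Λ_G(g) → GL(V)`. -/
theorem lambda_smash_welldefined (G : Type) [Group G] [Finite G] (g : G)
    (V : Type) [AddCommGroup V] [Module ℂ V]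
    (lam : Subgroup.centralizer ({g} : Set G) →* (V →ₗ[ℂ] V)ˣ)
    (eta : Multiplicative ℝ →* ℂˣ)
    (hcomp : (lam (gElem g) : V →ₗ[ℂ] V) =
      (eta (Multiplicative.ofAdd (1 : ℝ)) : ℂ) • (LinearMap.id : V →ₗ[ℂ] V)) :
    ∃ rho : Lambda G g →* (V →ₗ[ℂ] V)ˣ,
      ∀ (h : Subgroup.centralizer ({g} : Set G)) (t : ℝ),
        (rho (lmk h t) : V →ₗ[ℂ] V) =
          (eta (Multiplicative.ofAdd t) : ℂ) • (lam h : V →ₗ[ℂ] V) := by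
  classical
  -- scalar homomorphism into units of End
  let A := (algebraMap ℂ (Module.End ℂ V)).toMonoidHom
  let e : Multiplicative ℝ →* (V →ₗ[ℂ] V)ˣ := (Units.map A).comp eta
  have he : ∀ t : Multiplicative ℝ, ((e t : V →ₗ[ℂ] V)) =
      (eta t : ℂ) • (LinearMap.id : V →ₗ[ℂ] V) := by
    intro t
    show (algebraMap ℂ (Module.End ℂ V)) (eta t : ℂ) = _
    ext v
    simp [Module.algebraMap_end_apply]
  have hcomm : ∀ (t : Multiplicative ℝ) (u : (V →ₗ[ℂ] V)ˣ), e t * u = u * e t := by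
    intro t u
    apply Units.ext
    rw [Units.val_mul, Units.val_mul, he]
    ext v
    simp
  let φ : (Subgroup.centralizer ({g} : Set G) × Multiplicative ℝ) →* (V →ₗ[ℂ] V)ˣ :=
    { toFun := fun x => e x.2 * lam x.1
      map_one' := by simp
      map_mul' := by
        intro x y
        simp only [Prod.fst_mul, Prod.snd_mul, map_mul]
        conv_lhs => rw [mul_assoc, ← mul_assoc (e y.2), hcomm y.2 (lam x.1), mul_assoc, ← mul_assoc]
      }
  have hker : lambdaRel g 1 ≤ φ.ker := by
    rw [lambdaRel, Subgroup.zpowers_le]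
    rw [MonoidHom.mem_ker]
    show e (Multiplicative.ofAdd (-(1:ℤ) : ℝ)) * lam (gElem g) = 1
    apply Units.ext
    rw [Units.val_mul, he, Units.val_one, hcomp]
    rw [smul_mul_smul_comm, ← Units.val_mul, ← map_mul, ← ofAdd_add]
    norm_num
    ext v
    simp
  refine ⟨QuotientGroup.lift _ φ hker, fun h t => ?_⟩
  show ((φ (h, Multiplicative.ofAdd t) : (V →ₗ[ℂ] V)ˣ) : V →ₗ[ℂ] V) = _
  show ((e (Multiplicative.ofAdd t) * lam h : (V →ₗ[ℂ] V)ˣ) : V →ₗ[ℂ] V) = _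
  rw [Units.val_mul, he]
  ext v
  simp
end

section
/- For a finite group G and g ∈ G, the assignment (λ, η) ↦ λ⊙η induces a bijection between: (a) pairs consisting of an isomorphism class of a finite-dimensional irreducible complex representation λ of C_G(g) together with a group homomorphism η : ℝ → ℂˣ satisfying λ(g) = η(1)·id, and (b) isomorphism classes of finite-dimensional irreducible complex representations ρ of Λ_G(g). Under this bijection, λ is the restriction of ρ to C_G(g) (i.e., to the elements [h, 0]), and η is determined by ρ([1, t]) = η(t)·id. -/
noncomputable section

/-- A representation (valued in `GL(V)`) is irreducible: `V ≠ 0` and the only invariant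
subspaces are `⊥` and `⊤`. -/
def IsIrreducibleRep {M : Type} [Monoid M] {V : Type} [AddCommGroup V] [Module ℂ V]
    (rho : M →* (V →ₗ[ℂ] V)ˣ) : Prop :=
  (∃ v : V, v ≠ 0) ∧
    ∀ W : Submodule ℂ V,
      (∀ (m : M) (v : V), v ∈ W → (rho m : V →ₗ[ℂ] V) v ∈ W) → W = ⊥ ∨ W = ⊤

/-- Isomorphism of representations. -/
def RepIso {M : Type} [Monoid M] {V V' : Type} [AddCommGroup V] [Module ℂ V]
    [AddCommGroup V'] [Module ℂ V']
    (rho : M →* (V →ₗ[ℂ] V)ˣ) (rho' : M →* (V' →ₗ[ℂ] V')ˣ) : Prop :=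
  ∃ e : V ≃ₗ[ℂ] V',
    ∀ (m : M) (v : V), e ((rho m : V →ₗ[ℂ] V) v) = (rho' m : V' →ₗ[ℂ] V') (e v)

/-- `rho = lam ⊙ eta`, i.e. `rho [h, t] = eta(t) • lam(h)`. -/
def SmashEq {G : Type} [Group G] {g : G} {V : Type} [AddCommGroup V] [Module ℂ V]
    (rho : Lambda G g →* (V →ₗ[ℂ] V)ˣ)
    (lam : Subgroup.centralizer ({g} : Set G) →* (V →ₗ[ℂ] V)ˣ)
    (eta : Multiplicative ℝ →* ℂˣ) : Prop :=
  ∀ (h : Subgroup.centralizer ({g} : Set G)) (t : ℝ),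
    (rho (lmk h t) : V →ₗ[ℂ] V) =
      (eta (Multiplicative.ofAdd t) : ℂ) • (lam h : V →ₗ[ℂ] V)

/-- The compatibility condition `lam(g) = eta(1) • id`. -/
def SmashCond {G : Type} [Group G] (g : G) {V : Type} [AddCommGroup V] [Module ℂ V]
    (lam : Subgroup.centralizer ({g} : Set G) →* (V →ₗ[ℂ] V)ˣ)
    (eta : Multiplicative ℝ →* ℂˣ) : Prop :=
  (lam (gElem g) : V →ₗ[ℂ] V) =
    (eta (Multiplicative.ofAdd (1 : ℝ)) : ℂ) • (LinearMap.id : V →ₗ[ℂ] V)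

section Aux

variable {G : Type} [Group G] {g : G}

lemma lmk_mul {k : ℤ} (h h' : Subgroup.centralizer ({g} : Set G)) (t t' : ℝ) :
    (lmk h t : LambdaK G g k) * lmk h' t' = lmk (h * h') (t + t') := rfl

lemma lmk_surj {k : ℤ} (x : LambdaK G g k) :
    ∃ h t, x = lmk h t := by
  obtain ⟨⟨h, m⟩, rfl⟩ := QuotientGroup.mk_surjective x
  exact ⟨h, Multiplicative.toAdd m, rfl⟩

lemma lmk_g_eq : (lmk (gElem g) 0 : Lambda G g) = lmk 1 1 := by
  show QuotientGroup.mk _ = QuotientGroup.mk _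
  rw [QuotientGroup.eq]
  refine ⟨-1, ?_⟩
  show zElem g 1 ^ (-1:ℤ) = _
  rw [zpow_neg_one, zElem]
  refine Prod.ext ?_ ?_
  · show (gElem g)⁻¹ = (gElem g)⁻¹ * 1
    rw [mul_one]
  · show (Multiplicative.ofAdd (-(((1:ℤ)):ℝ)))⁻¹ = (Multiplicative.ofAdd (0:ℝ))⁻¹ * Multiplicative.ofAdd (1:ℝ)
    simp

lemma lmk_central (t : ℝ) (x : Lambda G g) : (lmk 1 t) * x = x * lmk 1 t := by
  obtain ⟨h, s, rfl⟩ := lmk_surj x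
  rw [lmk_mul, lmk_mul, one_mul, mul_one, add_comm]

end Aux

section Schur

variable {V : Type} [AddCommGroup V] [Module ℂ V]

lemma scalar_unique [Nontrivial V] {c c' : ℂ}
    (h : c • (LinearMap.id : V →ₗ[ℂ] V) = c' • LinearMap.id) : c = c' := by
  obtain ⟨v, hv⟩ := exists_ne (0 : V)
  have h2 : c • v = c' • v := by
    have := LinearMap.congr_fun h v; simpa using this
  have : (c - c') • v = 0 := by rw [sub_smul, h2, sub_self]
  rcases smul_eq_zero.mp this with h | h
  · exact sub_eq_zero.mp h
  · exact absurd h hv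

lemma schur {M : Type} [Monoid M] [FiniteDimensional ℂ V]
    (rho : M →* (V →ₗ[ℂ] V)ˣ) (hirr : IsIrreducibleRep rho)
    (T : V →ₗ[ℂ] V) (hT : ∀ m, T * (rho m : V →ₗ[ℂ] V) = (rho m : V →ₗ[ℂ] V) * T) :
    ∃ c : ℂ, T = c • LinearMap.id := by
  obtain ⟨v0, hv0⟩ := hirr.1
  have : Nontrivial V := ⟨v0, 0, hv0⟩
  obtain ⟨c, hc⟩ := Module.End.exists_eigenvalue (T : Module.End ℂ V)
  refine ⟨c, ?_⟩
  have hW := hirr.2 (Module.End.eigenspace T c) ?_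
  · rcases hW with hW | hW
    · exact absurd hW hc
    · ext v
      have hv : v ∈ Module.End.eigenspace T c := hW ▸ Submodule.mem_top
      simpa using Module.End.mem_eigenspace_iff.mp hv
  · intro m v hv
    rw [Module.End.mem_eigenspace_iff] at hv ⊢
    have := LinearMap.congr_fun (hT m) v
    simp only [Module.End.mul_apply] at this
    rw [this, hv, map_smul]

end Schur

section Construct

variable {G : Type} [Group G] {g : G} {V : Type} [AddCommGroup V] [Module ℂ V]

/-- scalar units -/
def su : ℂˣ →* (V →ₗ[ℂ] V)ˣ := Units.map (algebraMap ℂ (Module.End ℂ V)).toMonoidHom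

lemma su_val (c : ℂˣ) : ((su c : (V →ₗ[ℂ] V)ˣ) : V →ₗ[ℂ] V) = (c : ℂ) • LinearMap.id := by
  show (algebraMap ℂ (Module.End ℂ V)) (c : ℂ) = _
  rw [Module.algebraMap_end_eq_smul_id]

lemma su_mul_val (c : ℂˣ) (u : (V →ₗ[ℂ] V)ˣ) :
    ((su c * u : (V →ₗ[ℂ] V)ˣ) : V →ₗ[ℂ] V) = (c : ℂ) • (u : V →ₗ[ℂ] V) := by
  rw [Units.val_mul, su_val, smul_mul_assoc, Module.End.mul_eq_comp, LinearMap.id_comp]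

lemma smul_id_mul (c : ℂ) (A : V →ₗ[ℂ] V) :
    (c • (LinearMap.id : V →ₗ[ℂ] V)) * A = c • A := by
  rw [smul_mul_assoc, Module.End.mul_eq_comp, LinearMap.id_comp]

lemma mul_smul_id (c : ℂ) (A : V →ₗ[ℂ] V) :
    A * (c • (LinearMap.id : V →ₗ[ℂ] V)) = c • A := by
  rw [mul_smul_comm, Module.End.mul_eq_comp, LinearMap.comp_id]

lemma su_comm (c : ℂˣ) (u : (V →ₗ[ℂ] V)ˣ) : su c * u = u * su c := by
  apply Units.ext
  rw [su_mul_val, Units.val_mul, su_val, mul_smul_id]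

lemma exists_rho (lam : Subgroup.centralizer ({g} : Set G) →* (V →ₗ[ℂ] V)ˣ)
    (eta : Multiplicative ℝ →* ℂˣ) (hcond : SmashCond g lam eta) :
    ∃ rho : Lambda G g →* (V →ₗ[ℂ] V)ˣ, SmashEq rho lam eta := by
  set rho0 : (Subgroup.centralizer ({g} : Set G) × Multiplicative ℝ) →* (V →ₗ[ℂ] V)ˣ :=
    { toFun := fun p => su (eta p.2) * lam p.1
      map_one' := by simp
      map_mul' := fun p q => by
        show su (eta (p.2 * q.2)) * lam (p.1 * q.1) =
          su (eta p.2) * lam p.1 * (su (eta q.2) * lam q.1)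
        rw [map_mul, map_mul, map_mul, mul_assoc, ← mul_assoc (su (eta q.2)),
          su_comm (eta q.2) (lam p.1), mul_assoc, ← mul_assoc] } with hrho0
  have h1 : rho0 (zElem g 1) = 1 := by
    apply Units.ext
    show ((su (eta (Multiplicative.ofAdd (-((1:ℤ):ℝ)))) * lam (gElem g) :
      (V →ₗ[ℂ] V)ˣ) : V →ₗ[ℂ] V) = _
    rw [su_mul_val, hcond, smul_smul, ← Units.val_mul, ← map_mul]
    have : Multiplicative.ofAdd (-((1:ℤ):ℝ)) * Multiplicative.ofAdd (1:ℝ) = 1 := by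
      push_cast
      rw [← ofAdd_add, neg_add_cancel]
      rfl
    rw [this, map_one, Units.val_one, one_smul, Units.val_one]
    rfl
  have hker : ∀ x ∈ lambdaRel g 1, rho0 x = 1 := by
    intro x hx
    obtain ⟨m, rfl⟩ := hx
    rw [map_zpow, h1, one_zpow]
  refine ⟨QuotientGroup.lift (lambdaRel g 1) rho0 hker, ?_⟩
  intro h t
  show ((rho0 (h, Multiplicative.ofAdd t) : (V →ₗ[ℂ] V)ˣ) : V →ₗ[ℂ] V) = _
  exact su_mul_val _ _

lemma smash_irr {lam : Subgroup.centralizer ({g} : Set G) →* (V →ₗ[ℂ] V)ˣ}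
    {eta : Multiplicative ℝ →* ℂˣ} {rho : Lambda G g →* (V →ₗ[ℂ] V)ˣ}
    (hSE : SmashEq rho lam eta) (hirr : IsIrreducibleRep lam) : IsIrreducibleRep rho := by
  refine ⟨hirr.1, fun W hW => hirr.2 W fun h v hv => ?_⟩
  have := hW (lmk h 0) v hv
  rw [hSE h 0] at this
  simpa using W.smul_mem (((eta (Multiplicative.ofAdd (0:ℝ)))⁻¹ : ℂˣ) : ℂ) this

lemma smash_irr' {lam : Subgroup.centralizer ({g} : Set G) →* (V →ₗ[ℂ] V)ˣ}
    {eta : Multiplicative ℝ →* ℂˣ} {rho : Lambda G g →* (V →ₗ[ℂ] V)ˣ}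
    (hSE : SmashEq rho lam eta) (hirr : IsIrreducibleRep rho) : IsIrreducibleRep lam := by
  refine ⟨hirr.1, fun W hW => hirr.2 W fun m v hv => ?_⟩
  obtain ⟨h, t, rfl⟩ := lmk_surj m
  rw [hSE h t]
  exact W.smul_mem _ (hW h v hv)

lemma smash_unique {lam : Subgroup.centralizer ({g} : Set G) →* (V →ₗ[ℂ] V)ˣ}
    {eta : Multiplicative ℝ →* ℂˣ} {rho rho' : Lambda G g →* (V →ₗ[ℂ] V)ˣ}
    (hSE : SmashEq rho lam eta) (hSE' : SmashEq rho' lam eta) : rho' = rho := by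
  ext x
  obtain ⟨h, t, rfl⟩ := lmk_surj x
  rw [hSE h t, hSE' h t]

end Construct

/-- `(λ, η) ↦ λ ⊙ η` induces a bijection between pairs of
(an isomorphism class of) a finite-dimensional irreducible representation `λ` of `C_G(g)`
together with `η : ℝ → ℂˣ` satisfying `λ(g) = η(1)·id`, and isomorphism classes of
finite-dimensional irreducible representations of `Λ_G(g)`; moreover under the bijection
`λ` is the restriction of `ρ` along `h ↦ [h,0]` and `η` satisfies `ρ([1,t]) = η(t)·id`. -/
theorem lambda_irreducibles_classified (G : Type) [Group G] [Finite G] (g : G) :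
    -- the assignment is well defined and lands in irreducibles
    (∀ (V : Type) [AddCommGroup V] [Module ℂ V] [FiniteDimensional ℂ V]
        (lam : Subgroup.centralizer ({g} : Set G) →* (V →ₗ[ℂ] V)ˣ)
        (eta : Multiplicative ℝ →* ℂˣ),
        IsIrreducibleRep lam → SmashCond g lam eta →
        ∃ rho : Lambda G g →* (V →ₗ[ℂ] V)ˣ,
          SmashEq rho lam eta ∧
          IsIrreducibleRep rho ∧
          ∀ rho' : Lambda G g →* (V →ₗ[ℂ] V)ˣ, SmashEq rho' lam eta → rho' = rho) ∧
    -- surjectivity: every irreducible `ρ` is `λ ⊙ η` with `λ = ρ|_{C_G(g)}` and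
    -- `ρ([1,t]) = η(t)·id`
    (∀ (V : Type) [AddCommGroup V] [Module ℂ V] [FiniteDimensional ℂ V]
        (rho : Lambda G g →* (V →ₗ[ℂ] V)ˣ), IsIrreducibleRep rho →
        ∃ (lam : Subgroup.centralizer ({g} : Set G) →* (V →ₗ[ℂ] V)ˣ)
          (eta : Multiplicative ℝ →* ℂˣ),
          IsIrreducibleRep lam ∧ SmashCond g lam eta ∧ SmashEq rho lam eta ∧
          (∀ h : Subgroup.centralizer ({g} : Set G), lam h = rho (lmk h 0)) ∧
          (∀ t : ℝ, (rho (lmk 1 t) : V →ₗ[ℂ] V) =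
            (eta (Multiplicative.ofAdd t) : ℂ) • (LinearMap.id : V →ₗ[ℂ] V))) ∧
    -- injectivity on isomorphism classes
    (∀ (V V' : Type) [AddCommGroup V] [Module ℂ V] [FiniteDimensional ℂ V]
        [AddCommGroup V'] [Module ℂ V'] [FiniteDimensional ℂ V']
        (lam : Subgroup.centralizer ({g} : Set G) →* (V →ₗ[ℂ] V)ˣ)
        (lam' : Subgroup.centralizer ({g} : Set G) →* (V' →ₗ[ℂ] V')ˣ)
        (eta eta' : Multiplicative ℝ →* ℂˣ)
        (rho : Lambda G g →* (V →ₗ[ℂ] V)ˣ) (rho' : Lambda G g →* (V' →ₗ[ℂ] V')ˣ),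
        IsIrreducibleRep lam → IsIrreducibleRep lam' →
        SmashCond g lam eta → SmashCond g lam' eta' →
        SmashEq rho lam eta → SmashEq rho' lam' eta' →
        RepIso rho rho' → RepIso lam lam' ∧ eta = eta') := by
  refine ⟨?_, ?_, ?_⟩
  · -- well-definedness
    intro V _ _ _ lam eta hirr hcond
    obtain ⟨rho, hSE⟩ := exists_rho lam eta hcond
    exact ⟨rho, hSE, smash_irr hSE hirr, fun rho' hSE' => smash_unique hSE hSE'⟩
  · -- surjectivity
    intro V _ _ _ rho hirr
    have hnt : Nontrivial V := by obtain ⟨v, hv⟩ := hirr.1; exact ⟨v, 0, hv⟩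
    set incl : Subgroup.centralizer ({g} : Set G) →* Lambda G g :=
      MonoidHom.mk' (fun h => lmk h 0) (fun a b => by rw [lmk_mul, add_zero]) with hincl
    set lam := rho.comp incl with hlam
    have hcomm : ∀ t : ℝ, ∀ m : Lambda G g,
        ((rho (lmk 1 t) : (V →ₗ[ℂ] V)ˣ) : V →ₗ[ℂ] V) * (rho m : V →ₗ[ℂ] V)
          = (rho m : V →ₗ[ℂ] V) * (rho (lmk 1 t) : V →ₗ[ℂ] V) := by
      intro t m
      rw [← Units.val_mul, ← Units.val_mul, ← map_mul, ← map_mul, lmk_central]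
    have key : ∀ t : ℝ, ∃ c : ℂ,
        ((rho (lmk 1 t) : (V →ₗ[ℂ] V)ˣ) : V →ₗ[ℂ] V) = c • LinearMap.id :=
      fun t => schur rho hirr _ (hcomm t)
    choose eta0 heta0 using key
    have hne : ∀ t, eta0 t ≠ 0 := by
      intro t ht
      obtain ⟨v, hv⟩ := hirr.1
      apply hv
      have h2 : ((rho (lmk 1 t) : (V →ₗ[ℂ] V)ˣ) : V →ₗ[ℂ] V) v = 0 := by
        rw [heta0, ht]; simp
      calc v = ((((rho (lmk 1 t))⁻¹ : (V →ₗ[ℂ] V)ˣ) : V →ₗ[ℂ] V) *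
            ((rho (lmk 1 t) : (V →ₗ[ℂ] V)ˣ) : V →ₗ[ℂ] V)) v := by
              rw [Units.inv_mul]; rfl
        _ = 0 := by rw [Module.End.mul_apply, h2, map_zero]
    have hadd : ∀ t s : ℝ, eta0 (t + s) = eta0 t * eta0 s := by
      intro t s
      apply scalar_unique (V := V)
      rw [← heta0]
      have h3 : (lmk 1 (t + s) : Lambda G g) = lmk 1 t * lmk 1 s := by
        rw [lmk_mul, one_mul]
      rw [h3, map_mul, Units.val_mul, heta0, heta0, smul_id_mul, smul_smul]
    set eta : Multiplicative ℝ →* ℂˣ :=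
      MonoidHom.mk' (fun t => Units.mk0 (eta0 t.toAdd) (hne _))
        (fun a b => by
          apply Units.ext
          rw [Units.val_mul]
          exact hadd a.toAdd b.toAdd) with heta
    have hSE : SmashEq rho lam eta := by
      intro h t
      have hsplit : (lmk h t : Lambda G g) = lmk h 0 * lmk 1 t := by
        rw [lmk_mul, mul_one, zero_add]
      rw [hsplit, map_mul, Units.val_mul, heta0, mul_smul_id]
      rfl
    have hcond : SmashCond g lam eta := by
      show ((rho (lmk (gElem g) 0) : (V →ₗ[ℂ] V)ˣ) : V →ₗ[ℂ] V) = _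
      rw [lmk_g_eq, heta0]
      rfl
    exact ⟨lam, eta, smash_irr' hSE hirr, hcond, hSE, fun h => rfl, fun t => heta0 t⟩
  · -- injectivity
    intro V V' _ _ _ _ _ _ lam lam' eta eta' rho rho' hirr hirr' hc hc' hSE hSE' hiso
    obtain ⟨e, he⟩ := hiso
    have hnt : Nontrivial V := by obtain ⟨v, hv⟩ := hirr.1; exact ⟨v, 0, hv⟩
    have e1 : ((eta (Multiplicative.ofAdd (0 : ℝ)) : ℂˣ) : ℂ) = 1 := by
      rw [ofAdd_zero, map_one, Units.val_one]
    have e1' : ((eta' (Multiplicative.ofAdd (0 : ℝ)) : ℂˣ) : ℂ) = 1 := by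
      rw [ofAdd_zero, map_one, Units.val_one]
    have hrest : ∀ (h : Subgroup.centralizer ({g} : Set G)) (v : V),
        (lam h : V →ₗ[ℂ] V) v = (rho (lmk h 0) : V →ₗ[ℂ] V) v := by
      intro h v
      rw [hSE h 0, e1, one_smul]
    have hrest' : ∀ (h : Subgroup.centralizer ({g} : Set G)) (v : V'),
        (lam' h : V' →ₗ[ℂ] V') v = (rho' (lmk h 0) : V' →ₗ[ℂ] V') v := by
      intro h v
      rw [hSE' h 0, e1', one_smul]
    constructor
    · refine ⟨e, fun h v => ?_⟩
      rw [hrest, hrest', he]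
    · obtain ⟨v, hv⟩ := hirr.1
      have hev : e v ≠ 0 := by
        intro h0
        exact hv (by simpa using congrArg e.symm h0)
      refine DFunLike.ext _ _ fun t => Units.ext ?_
      have h1 : (rho (lmk 1 t.toAdd) : V →ₗ[ℂ] V) v
          = ((eta t : ℂˣ) : ℂ) • v := by
        rw [hSE 1 t.toAdd, map_one]
        simp
      have h1' : (rho' (lmk 1 t.toAdd) : V' →ₗ[ℂ] V') (e v)
          = ((eta' t : ℂˣ) : ℂ) • (e v) := by
        rw [hSE' 1 t.toAdd, map_one]
        simp
      have h2 := he (lmk 1 t.toAdd) v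
      rw [h1, h1', map_smul] at h2
      have h3 : (((eta t : ℂˣ) : ℂ) - ((eta' t : ℂˣ) : ℂ)) • e v = 0 := by
        rw [sub_smul, h2, sub_self]
      rcases smul_eq_zero.mp h3 with h4 | h4
      · exact sub_eq_zero.mp h4
      · exact absurd h4 hev

end
end

section
/- For a finite group G, g ∈ G, and an integer k ≥ 1, the homomorphisms α_k : Λ^k_G(g) → Λ_G(g), [h, t] ↦ [h, t/k], and π_k : Λ^k_G(g) → ℝ/kℤ, [h, t] ↦ t mod kℤ, exhibit Λ^k_G(g) as the pullback of π : Λ_G(g) → ℝ/ℤ, [h, t] ↦ t mod ℤ, along the reduction map ℝ/kℤ → ℝ/ℤ, t ↦ t/k mod ℤ: the induced homomorphism from Λ^k_G(g) to the fiber product {(x, u) ∈ Λ_G(g) × (ℝ/kℤ) : π(x) = u/k mod ℤ} is a group isomorphism. -/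
noncomputable section

/-- `ℝ → ℝ/ℤ` as a monoid hom of multiplicative groups. -/
def circleHom : Multiplicative ℝ →* Multiplicative (AddCircle (1 : ℝ)) :=
  AddMonoidHom.toMultiplicative (QuotientAddGroup.mk' (AddSubgroup.zmultiples (1 : ℝ)))

/-- `(h, t) ↦ t mod ℤ` on `C_G(g) × ℝ`. -/
def piPre (G : Type) [Group G] (g : G) :
    (Subgroup.centralizer ({g} : Set G) × Multiplicative ℝ) →*
      Multiplicative (AddCircle (1 : ℝ)) :=
  circleHom.comp (MonoidHom.snd _ _)

theorem piPre_ker (G : Type) [Group G] (g : G) : lambdaRel g 1 ≤ (piPre G g).ker := by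
  intro x hx
  rw [lambdaRel, Subgroup.mem_zpowers_iff] at hx
  obtain ⟨m, rfl⟩ := hx
  rw [MonoidHom.mem_ker, map_zpow]
  have hz : piPre G g (zElem g 1) = 1 := by
    show Multiplicative.ofAdd (((-(1:ℤ) : ℝ) : AddCircle (1:ℝ))) = 1
    have : ((-(1:ℤ) : ℝ) : AddCircle (1:ℝ)) = 0 := by
      push_cast
      rw [show ((-1 : ℝ) : AddCircle (1:ℝ)) = -((1:ℝ) : AddCircle (1:ℝ)) by
        exact (QuotientAddGroup.mk_neg _ _), AddCircle.coe_period, neg_zero]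
    rw [this]; rfl
  rw [hz, one_zpow]

/-- The map `π : Λ_G(g) → ℝ/ℤ`, `[h,t] ↦ t mod ℤ`. -/
def piHom (G : Type) [Group G] (g : G) :
    Lambda G g →* Multiplicative (AddCircle (1 : ℝ)) :=
  QuotientGroup.lift _ (piPre G g) (piPre_ker G g)

/-- The map `ι : C_G(g) → Λ_G(g)`, `h ↦ [h, 0]`. -/
def iotaHom (G : Type) [Group G] (g : G) :
    Subgroup.centralizer ({g} : Set G) →* Lambda G g :=
  (QuotientGroup.mk' (lambdaRel g 1)).comp (MonoidHom.inl _ _)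

/-- Division by `k` as an additive monoid hom of `ℝ`. -/
def divHom (k : ℝ) : ℝ →+ ℝ :=
  AddMonoidHom.mk' (fun t => t / k) (fun a b => add_div a b k)

/-- The reduction map `ℝ/kℤ → ℝ/ℤ`, `t ↦ t/k mod ℤ`. -/
def redMap (k : ℝ) (hk : k ≠ 0) : AddCircle k →+ AddCircle (1 : ℝ) :=
  QuotientAddGroup.map (AddSubgroup.zmultiples k) (AddSubgroup.zmultiples (1 : ℝ))
    (divHom k)
    (by
      intro x hx
      obtain ⟨n, rfl⟩ := AddSubgroup.mem_zmultiples_iff.mp hx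
      refine AddSubgroup.mem_comap.mpr (AddSubgroup.mem_zmultiples_iff.mpr ⟨n, ?_⟩)
      show n • (1 : ℝ) = (n • k) / k
      rw [zsmul_eq_mul, zsmul_eq_mul, mul_one, mul_div_assoc, div_self hk, mul_one])

/-- The fiber product `{(x, u) ∈ Λ_G(g) × ℝ/kℤ : π(x) = u/k mod ℤ}`. -/
def fiberProd (G : Type) [Group G] (g : G) (k : ℝ) (hk : k ≠ 0) :
    Subgroup (Lambda G g × Multiplicative (AddCircle k)) where
  carrier := {p | piHom G g p.1 = Multiplicative.ofAdd (redMap k hk p.2.toAdd)}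
  mul_mem' := by
    intro a b ha hb
    simp only [Set.mem_setOf_eq] at *
    show piHom G g (a.1 * b.1) = _
    rw [map_mul, ha, hb]
    show _ = Multiplicative.ofAdd (redMap k hk (Multiplicative.toAdd (a.2 * b.2)))
    rw [toAdd_mul, map_add, ofAdd_add]
  one_mem' := by
    simp only [Set.mem_setOf_eq]
    show piHom G g 1 = _
    rw [map_one]
    show _ = Multiplicative.ofAdd (redMap k hk (Multiplicative.toAdd (1 : Multiplicative (AddCircle k))))
    rw [toAdd_one, map_zero, ofAdd_zero]
  inv_mem' := by
    intro a ha
    simp only [Set.mem_setOf_eq] at *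
    show piHom G g a.1⁻¹ = _
    rw [map_inv, ha]
    show _ = Multiplicative.ofAdd (redMap k hk (Multiplicative.toAdd a.2⁻¹))
    rw [toAdd_inv, map_neg, ofAdd_neg]

/-!
Since `(g, -1)` generates the relations of `Λ_G(g)`, `α_k [h, t] = [h, t/k]` is trivial only if
`(h, t/k) = (g^m, -m)`, i.e. `(h, t) = (g, -k)^m`; so `α_k` is injective. A point
`([h, s], t mod kℤ)` of the fiber product has `t/k = s + n` for some `n : ℤ`, and it is the image
of `[h g^(-n), t]`, because `[h g^(-n), s + n] = [h, s]` in `Λ_G(g)`.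
-/

section Pullback

variable {G : Type} [Group G] {g : G}

open Multiplicative

lemma zElem_zpow (k m : ℤ) : zElem g k ^ m = (gElem g ^ m, ofAdd (-((k : ℝ) * m))) := by
  refine Prod.ext rfl ?_
  change ofAdd (-(k : ℝ)) ^ m = _
  rw [← ofAdd_zsmul, zsmul_eq_mul]
  ring_nf

lemma exists_lmk_eq {k : ℤ} (x : LambdaK G g k) :
    ∃ (h : Subgroup.centralizer ({g} : Set G)) (t : ℝ), lmk h t = x := by
  obtain ⟨⟨h, t⟩, rfl⟩ := QuotientGroup.mk_surjective x
  exact ⟨h, t.toAdd, rfl⟩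

lemma lmk_eq_one_iff {k : ℤ} {h : Subgroup.centralizer ({g} : Set G)} {t : ℝ} :
    (lmk h t : LambdaK G g k) = 1 ↔ ∃ m : ℤ, gElem g ^ m = h ∧ -((k : ℝ) * m) = t := by
  refine (QuotientGroup.eq_one_iff (N := lambdaRel g k) _).trans ?_
  simp only [lambdaRel, Subgroup.mem_zpowers_iff, zElem_zpow, Prod.ext_iff, ofAdd.injective.eq_iff]

lemma lmk_mul_gElem_zpow {k : ℤ} (h : Subgroup.centralizer ({g} : Set G)) (t : ℝ) (m : ℤ) :
    (lmk (h * gElem g ^ m) t : LambdaK G g k) = lmk h (t + k * m) := by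
  refine QuotientGroup.eq.mpr (Subgroup.mem_zpowers_iff.mpr ⟨-m, ?_⟩)
  refine Prod.ext ?_ ?_
  · simp [zElem_zpow]
  · simp only [zElem_zpow, Prod.snd_mul, Prod.snd_inv, ← ofAdd_neg, ← ofAdd_add]
    push_cast
    ring_nf

def alphaK (k : ℤ) (hk : (k : ℝ) ≠ 0) : LambdaK G g k →* Lambda G g :=
  QuotientGroup.map _ _ ((MonoidHom.id _).prodMap (AddMonoidHom.toMultiplicative (divHom k))) <|
    Subgroup.zpowers_le.mpr <| by
      have hz : (gElem g, ofAdd (-(k : ℝ) / k)) = zElem g 1 := by simp [zElem, hk]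
      change (gElem g, ofAdd (-(k : ℝ) / k)) ∈ lambdaRel g 1
      exact hz ▸ Subgroup.mem_zpowers _

lemma alphaK_lmk (k : ℤ) (hk : (k : ℝ) ≠ 0) (h : Subgroup.centralizer ({g} : Set G)) (t : ℝ) :
    alphaK k hk (lmk h t) = lmk h (t / k) :=
  rfl

def piK (k : ℤ) : LambdaK G g k →* Multiplicative (AddCircle (k : ℝ)) :=
  QuotientGroup.lift _
    ((AddMonoidHom.toMultiplicative (QuotientAddGroup.mk' _)).comp (MonoidHom.snd _ _)) <|
    Subgroup.zpowers_le.mpr <| by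
      change ofAdd ((-(k : ℝ) : ℝ) : AddCircle (k : ℝ)) = 1
      rw [AddCircle.coe_neg, AddCircle.coe_period, neg_zero, ofAdd_zero]

lemma piK_lmk (k : ℤ) (h : Subgroup.centralizer ({g} : Set G)) (t : ℝ) :
    piK k (lmk h t) = ofAdd (t : AddCircle (k : ℝ)) :=
  rfl

lemma alphaK_injective (k : ℤ) (hk : (k : ℝ) ≠ 0) : Function.Injective (alphaK (g := g) k hk) := by
  refine (injective_iff_map_eq_one _).mpr fun x hx => ?_
  obtain ⟨h, t, rfl⟩ := exists_lmk_eq x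
  obtain ⟨m, hm, hmt⟩ := lmk_eq_one_iff.mp (alphaK_lmk k hk h t ▸ hx)
  refine lmk_eq_one_iff.mpr ⟨m, hm, ?_⟩
  rw [eq_div_iff hk] at hmt
  rw [← hmt]
  push_cast
  ring

lemma piHom_alphaK (k : ℤ) (hk : (k : ℝ) ≠ 0) (x : LambdaK G g k) :
    piHom G g (alphaK k hk x) = ofAdd (redMap k hk (piK k x).toAdd) := by
  obtain ⟨h, t, rfl⟩ := exists_lmk_eq x
  rfl

def toFiberProd (k : ℤ) (hk : (k : ℝ) ≠ 0) : LambdaK G g k →* fiberProd G g k hk :=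
  ((alphaK k hk).prod (piK k)).codRestrict _ (piHom_alphaK k hk)

lemma toFiberProd_injective (k : ℤ) (hk : (k : ℝ) ≠ 0) :
    Function.Injective (toFiberProd (g := g) k hk) :=
  fun _ _ hxy => alphaK_injective k hk (congrArg (fun p => p.1.1) hxy)

lemma toFiberProd_surjective (k : ℤ) (hk : (k : ℝ) ≠ 0) :
    Function.Surjective (toFiberProd (g := g) k hk) := by
  rintro ⟨⟨x, u⟩, hxu⟩
  obtain ⟨h, s, rfl⟩ := exists_lmk_eq x
  obtain ⟨t, ht⟩ := QuotientAddGroup.mk_surjective u.toAdd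
  obtain rfl : u = ofAdd (t : AddCircle (k : ℝ)) := by rw [ht]; rfl
  have hst : ((s : ℝ) : AddCircle (1 : ℝ)) = ((t / k : ℝ) : AddCircle (1 : ℝ)) :=
    ofAdd.injective hxu
  obtain ⟨n, hn⟩ := AddSubgroup.mem_zmultiples_iff.mp (QuotientAddGroup.eq.mp hst)
  refine ⟨lmk (h * gElem g ^ (-n)) t, Subtype.ext (Prod.ext ?_ rfl)⟩
  change alphaK k hk (lmk _ t) = lmk h s
  rw [alphaK_lmk, lmk_mul_gElem_zpow]
  congr 1
  rw [zsmul_one] at hn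
  push_cast
  linarith

end Pullback

theorem lambdaK_is_pullback_general (G : Type) [Group G] (g : G) (k : ℤ) :
    ∀ hk' : (k : ℝ) ≠ 0,
    (∀ t : ℝ, redMap (k : ℝ) hk' ((t : AddCircle (k : ℝ))) = ((t / k : ℝ) : AddCircle (1 : ℝ))) ∧
    ∃ (alphak : LambdaK G g k →* Lambda G g)
      (pik : LambdaK G g k →* Multiplicative (AddCircle (k : ℝ))),
      (∀ (h : Subgroup.centralizer ({g} : Set G)) (t : ℝ),
        alphak (lmk h t) = lmk h (t / (k : ℝ))) ∧
      (∀ (h : Subgroup.centralizer ({g} : Set G)) (t : ℝ),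
        pik (lmk h t) = Multiplicative.ofAdd ((t : AddCircle (k : ℝ)))) ∧
      ∃ e : LambdaK G g k ≃* fiberProd G g (k : ℝ) hk',
        ∀ x : LambdaK G g k,
          ((e x : Lambda G g × Multiplicative (AddCircle (k : ℝ)))).1 = alphak x ∧
          ((e x : Lambda G g × Multiplicative (AddCircle (k : ℝ)))).2 = pik x := by
  intro hk
  exact ⟨fun _ => rfl, alphaK k hk, piK k, alphaK_lmk k hk, piK_lmk k,
    MulEquiv.ofBijective _ ⟨toFiberProd_injective k hk, toFiberProd_surjective k hk⟩,
    fun _ => ⟨rfl, rfl⟩⟩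

/-- `Λ^k_G(g)` together with `α_k` and `π_k` is the pullback of
`π : Λ_G(g) → ℝ/ℤ` along the reduction map `ℝ/kℤ → ℝ/ℤ`. -/
theorem lambdaK_is_pullback (G : Type) [Group G] [Finite G] (g : G) (k : ℤ) (hk : 1 ≤ k) :
    ∀ hk' : (k : ℝ) ≠ 0,
    (∀ t : ℝ, redMap (k : ℝ) hk' ((t : AddCircle (k : ℝ))) = ((t / k : ℝ) : AddCircle (1 : ℝ))) ∧
    ∃ (alphak : LambdaK G g k →* Lambda G g)
      (pik : LambdaK G g k →* Multiplicative (AddCircle (k : ℝ))),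
      (∀ (h : Subgroup.centralizer ({g} : Set G)) (t : ℝ),
        alphak (lmk h t) = lmk h (t / (k : ℝ))) ∧
      (∀ (h : Subgroup.centralizer ({g} : Set G)) (t : ℝ),
        pik (lmk h t) = Multiplicative.ofAdd ((t : AddCircle (k : ℝ)))) ∧
      ∃ e : LambdaK G g k ≃* fiberProd G g (k : ℝ) hk',
        ∀ x : LambdaK G g k,
          ((e x : Lambda G g × Multiplicative (AddCircle (k : ℝ)))).1 = alphak x ∧
          ((e x : Lambda G g × Multiplicative (AddCircle (k : ℝ)))).2 = pik x :=
  lambdaK_is_pullback_general G g k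

end
end

section
/- Let I and J be types, σ a permutation of I, τ : I → Perm(J), and π the permutation of I × J given by π(i, j) = (σ(i), τ(σ(i))(j)). Fix (i, j) ∈ I × J. Suppose i has finite minimal period s ≥ 1 under σ (so σ^s(i) = i and s is least with this property), and let ρ := τ(σ^s(i)) ∘ τ(σ^{s−1}(i)) ∘ ⋯ ∘ τ(σ(i)) be the return permutation of J. If j has finite minimal period r ≥ 1 under ρ, then the minimal period of (i, j) under π is exactly s·r; equivalently, the π-orbit of (i, j) has exactly s·r elements. -/
/-- The permutation `π` of `I × J` given by `π(i, j) = (σ(i), τ(σ(i))(j))`. -/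
def skewPerm {I J : Type} (sigma : Equiv.Perm I) (tau : I → Equiv.Perm J) :
    Equiv.Perm (I × J) where
  toFun p := (sigma p.1, tau (sigma p.1) p.2)
  invFun p := (sigma⁻¹ p.1, (tau p.1)⁻¹ p.2)
  left_inv := by intro p; simp
  right_inv := by intro p; simp

/-- The return composite `τ(σ^q(i)) ∘ τ(σ^{q-1}(i)) ∘ ⋯ ∘ τ(σ(i))`. -/
def returnProd {I J : Type} (sigma : Equiv.Perm I) (tau : I → Equiv.Perm J) (i : I) :
    ℕ → Equiv.Perm J
  | 0 => 1
  | q + 1 => tau ((sigma ^ (q + 1)) i) * returnProd sigma tau i q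

lemma skewPerm_pow_apply {I J : Type} (sigma : Equiv.Perm I) (tau : I → Equiv.Perm J)
    (i : I) (j : J) (n : ℕ) :
    ((skewPerm sigma tau) ^ n) (i, j) = ((sigma ^ n) i, (returnProd sigma tau i n) j) := by
  induction n with
  | zero => simp [returnProd]
  | succ n ih =>
    rw [pow_succ', Equiv.Perm.mul_apply, ih]
    show ((sigma * sigma ^ n) i, tau ((sigma * sigma ^ n) i) ((returnProd sigma tau i n) j))
      = _
    rw [← pow_succ']
    rfl

lemma sigma_pow_mul_self {I : Type} (sigma : Equiv.Perm I) (i : I) (s : ℕ)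
    (hsig : (sigma ^ s) i = i) (m : ℕ) : (sigma ^ (m * s)) i = i := by
  induction m with
  | zero => simp
  | succ m ih => rw [Nat.succ_mul, pow_add, Equiv.Perm.mul_apply, hsig, ih]

lemma returnProd_add_mul {I J : Type} (sigma : Equiv.Perm I) (tau : I → Equiv.Perm J)
    (i : I) (s : ℕ) (hsig : (sigma ^ s) i = i) (m k : ℕ) :
    returnProd sigma tau i (m * s + k)
      = returnProd sigma tau i k * returnProd sigma tau i (m * s) := by
  induction k with
  | zero => simp [returnProd]
  | succ k ih =>
    show tau ((sigma ^ (m * s + k + 1)) i) * returnProd sigma tau i (m * s + k) = _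
    rw [ih, show m * s + k + 1 = (k + 1) + m * s by ring, pow_add, Equiv.Perm.mul_apply,
      sigma_pow_mul_self sigma i s hsig m, returnProd, mul_assoc]

lemma returnProd_mul {I J : Type} (sigma : Equiv.Perm I) (tau : I → Equiv.Perm J)
    (i : I) (s : ℕ) (hsig : (sigma ^ s) i = i) (m : ℕ) :
    returnProd sigma tau i (m * s) = (returnProd sigma tau i s) ^ m := by
  induction m with
  | zero => simp [returnProd]
  | succ m ih =>
    rw [Nat.succ_mul, returnProd_add_mul sigma tau i s hsig m s, ih, pow_succ']

lemma perm_pow_fixed {J : Type} (f : Equiv.Perm J) (j : J) (h : f j = j) (l : ℕ) :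
    (f ^ l) j = j := by
  induction l with
  | zero => rfl
  | succ l ih => rw [pow_succ, Equiv.Perm.mul_apply, h, ih]

/-- If `i` has minimal period `s ≥ 1` under `σ` and `j` has minimal
period `r ≥ 1` under the return permutation `ρ = τ(σ^s(i)) ∘ ⋯ ∘ τ(σ(i))`, then `(i, j)`
has minimal period exactly `s·r` under `π`; equivalently, the `π`-orbit of `(i, j)` has
exactly `s·r` elements. -/
theorem skewPerm_minimalPeriod {I J : Type} (sigma : Equiv.Perm I) (tau : I → Equiv.Perm J)
    (i : I) (j : J) (s r : ℕ) (hs : 1 ≤ s) (hr : 1 ≤ r)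
    (hsig : (sigma ^ s) i = i)
    (hsi : Function.minimalPeriod (⇑sigma) i = s)
    (hrj : Function.minimalPeriod (⇑(returnProd sigma tau i s)) j = r) :
    Function.minimalPeriod (⇑(skewPerm sigma tau)) (i, j) = s * r ∧
    Set.ncard {p : I × J | ∃ q : ℤ, ((skewPerm sigma tau) ^ q) (i, j) = p} = s * r := by
  set π := skewPerm sigma tau
  set ρ := returnProd sigma tau i s
  have key : ∀ n : ℕ, Function.IsPeriodicPt (⇑π) n (i, j) ↔ s * r ∣ n := by
    intro n
    constructor
    · intro h
      have h' : (π ^ n) (i, j) = (i, j) := by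
        have := h
        rwa [Function.IsPeriodicPt, Function.IsFixedPt, Equiv.Perm.iterate_eq_pow] at this
      rw [skewPerm_pow_apply] at h'
      have h1 : (sigma ^ n) i = i := congrArg Prod.fst h'
      have hsdvd : s ∣ n := by
        rw [← hsi]
        exact Function.IsPeriodicPt.minimalPeriod_dvd
          (by rwa [Function.IsPeriodicPt, Function.IsFixedPt, Equiv.Perm.iterate_eq_pow])
      obtain ⟨m, hm⟩ := hsdvd
      have h2 : (returnProd sigma tau i n) j = j := congrArg Prod.snd h'
      rw [hm, mul_comm, returnProd_mul sigma tau i s hsig m] at h2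
      have hrdvd : r ∣ m := by
        rw [← hrj]
        exact Function.IsPeriodicPt.minimalPeriod_dvd
          (by rwa [Function.IsPeriodicPt, Function.IsFixedPt, Equiv.Perm.iterate_eq_pow])
      obtain ⟨l, hl⟩ := hrdvd
      exact ⟨l, by rw [hm, hl]; ring⟩
    · rintro ⟨l, rfl⟩
      rw [Function.IsPeriodicPt, Function.IsFixedPt, Equiv.Perm.iterate_eq_pow,
        skewPerm_pow_apply]
      have hσ : (sigma ^ (s * r * l)) i = i := by
        rw [show s * r * l = (r * l) * s by ring]
        exact sigma_pow_mul_self sigma i s hsig _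
      have hρ : (returnProd sigma tau i (s * r * l)) j = j := by
        rw [show s * r * l = (r * l) * s by ring, returnProd_mul sigma tau i s hsig,
          pow_mul]
        have hρr : (ρ ^ r) j = j := by
          have : Function.IsPeriodicPt (⇑ρ) r j := hrj ▸ Function.isPeriodicPt_minimalPeriod _ _
          rwa [Function.IsPeriodicPt, Function.IsFixedPt, Equiv.Perm.iterate_eq_pow] at this
        exact perm_pow_fixed (ρ ^ r) j hρr l
      rw [hσ, hρ]
  have hmin : Function.minimalPeriod (⇑π) (i, j) = s * r := by
    have hpos : 0 < s * r := Nat.mul_pos hs hr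
    have h1 : Function.minimalPeriod (⇑π) (i, j) ∣ s * r :=
      Function.IsPeriodicPt.minimalPeriod_dvd ((key (s * r)).mpr dvd_rfl)
    have hper : Function.IsPeriodicPt (⇑π) (Function.minimalPeriod (⇑π) (i, j)) (i, j) :=
      Function.isPeriodicPt_minimalPeriod _ _
    have h2 : s * r ∣ Function.minimalPeriod (⇑π) (i, j) := (key _).mp hper
    exact Nat.dvd_antisymm h1 h2
  refine ⟨hmin, ?_⟩
  have hset : {p : I × J | ∃ q : ℤ, (π ^ q) (i, j) = p}
      = MulAction.orbit (Subgroup.zpowers π) (i, j) := by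
    ext p
    simp only [Set.mem_setOf_eq, MulAction.mem_orbit_iff]
    constructor
    · rintro ⟨q, hq⟩; exact ⟨⟨π ^ q, q, rfl⟩, hq⟩
    · rintro ⟨⟨g, q, rfl⟩, hg⟩; exact ⟨q, hg⟩
  rw [hset]
  have : Nat.card (MulAction.orbit (Subgroup.zpowers π) (i, j))
      = Function.minimalPeriod (π • ·) (i, j) := by
    rw [Nat.card_congr (MulAction.orbitZPowersEquiv π (i, j)), Nat.card_zmod]
  rw [← Nat.card_coe_set_eq, this]
  have h3 : (π • ·) = ⇑π := rfl
  rw [h3, hmin]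
end

section
/- Let d ≥ 1 and e ≥ 1 be integers, let α be a finite type with exactly d·e elements, and let σ be a permutation of α such that every point of α has minimal period exactly e under σ (so σ is a product of exactly d disjoint cycles, each of length e). Then the centralizer of σ in the permutation group of α is isomorphic to the wreath product (ℤ/eℤ) ≀ Σ_d, i.e., to the semidirect product ((ℤ/eℤ)^d) ⋊ Σ_d, where the symmetric group Σ_d on d letters acts on (ℤ/eℤ)^d by permuting the coordinates. -/
/-!
Every cycle of `σ` has length `e`, so choosing a base point on each of the `d` cycles identifies
`α` with `Fin d × ZMod e`, turning `σ` into the shift `(i, k) ↦ (i, k + 1)`. A permutation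
commuting with the shift is determined by where it sends the base points: it maps cycle `i` to
some cycle `ρ i`, rotating it by some `v (ρ i)`, and `(v, ρ)` runs exactly over the wreath
product.
-/
noncomputable section

/-- The coordinate-permuting automorphism of `Fin d → M` attached to a permutation. -/
def permMulAut (d : ℕ) (M : Type) [Group M] (rho : Equiv.Perm (Fin d)) :
    MulAut (Fin d → M) :=
  { Equiv.arrowCongr rho (Equiv.refl M) with
    map_mul' := by intro f g; rfl }

/-- `Σ_d` acting on `(Fin d → M)` by permuting coordinates. -/
def permHom (d : ℕ) (M : Type) [Group M] : Equiv.Perm (Fin d) →* MulAut (Fin d → M) where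
  toFun := permMulAut d M
  map_one' := by ext f x; rfl
  map_mul' := by intro a b; ext f x; rfl

/-- The wreath product `M ≀ Σ_d = M^d ⋊ Σ_d`. -/
abbrev WreathProduct (M : Type) [Group M] (d : ℕ) : Type :=
  SemidirectProduct (Fin d → M) (Equiv.Perm (Fin d)) (permHom d M)

theorem Subgroup.map_centralizer_singleton {G H : Type*} [Group G] [Group H] (P : G ≃* H)
    (g : G) :
    (centralizer {g}).map (P : G →* H) = centralizer {P g} := by
  ext x
  simp only [mem_map, mem_centralizer_singleton_iff]
  constructor
  · rintro ⟨y, hy, rfl⟩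
    simp only [MonoidHom.coe_coe, ← map_mul, hy]
  · intro hx
    exact ⟨P.symm x, P.injective (by simpa using hx), P.apply_symm_apply x⟩

open Equiv Equiv.Perm

def zmodShift (ι : Type*) (n : ℕ) : Perm (ι × ZMod n) :=
  prodCongr (Equiv.refl ι) (Equiv.addRight 1)

section zmodShift

variable {ι : Type*} {n : ℕ}

@[simp]
theorem zmodShift_apply (p : ι × ZMod n) : zmodShift ι n p = (p.1, p.2 + 1) := rfl

theorem zmodShift_zpow_apply (m : ℤ) (p : ι × ZMod n) :
    (zmodShift ι n ^ m) p = (p.1, p.2 + m) := by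
  induction m using Int.induction_on generalizing p with
  | zero => simp
  | succ m ih =>
    rw [zpow_add_one, mul_apply, ih, zmodShift_apply]
    push_cast
    ring_nf
  | pred m ih =>
    have hinv : (zmodShift ι n)⁻¹ p = (p.1, p.2 - 1) := by
      rw [Perm.inv_eq_iff_eq, zmodShift_apply, sub_add_cancel]
    rw [zpow_sub_one, mul_apply, hinv, ih]
    push_cast
    ring_nf

theorem apply_eq_of_commute_zmodShift {π : Perm (ι × ZMod n)} (h : Commute π (zmodShift ι n))
    (i : ι) (k : ZMod n) : π (i, k) = ((π (i, 0)).1, (π (i, 0)).2 + k) := by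
  obtain ⟨m, rfl⟩ := ZMod.intCast_surjective k
  have := congr($((h.zpow_right m).eq) (i, 0))
  simpa [mul_apply, zmodShift_zpow_apply] using this

end zmodShift

namespace Equiv.Perm

variable {α : Type*} {σ : Perm α} {n : ℕ}

theorem zpow_apply_eq_zpow_apply_iff {x : α} (hx : Function.minimalPeriod σ x = n) {a b : ℤ} :
    (σ ^ a) x = (σ ^ b) x ↔ (a : ZMod n) = b := by
  have h : (σ ^ (-a + b)) x = x ↔ (Function.minimalPeriod σ x : ℤ) ∣ -a + b :=
    MulAction.zpow_smul_eq_iff_minimalPeriod_dvd (a := σ) (b := x)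
  rw [zpow_add, zpow_neg, mul_apply, inv_eq_iff_eq, neg_add_eq_sub, hx] at h
  rw [ZMod.intCast_eq_intCast_iff_dvd_sub, eq_comm, h]

theorem bijective_zpow_apply_out (hσ : ∀ x, Function.minimalPeriod σ x = n) :
    Function.Bijective fun p : Quotient (SameCycle.setoid σ) × ZMod n ↦
      (σ ^ (p.2.cast : ℤ)) p.1.out := by
  constructor
  · rintro ⟨q, k⟩ ⟨q', k'⟩ h
    dsimp only at h
    obtain rfl : q = q' := by
      rw [← q.out_eq, ← q'.out_eq, Quotient.eq]
      have hc : SameCycle σ ((σ ^ (k.cast : ℤ)) q.out) ((σ ^ (k'.cast : ℤ)) q'.out) := by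
        rw [h]
      exact sameCycle_zpow_left.mp (sameCycle_zpow_right.mp hc)
    rw [zpow_apply_eq_zpow_apply_iff (hσ _), ZMod.intCast_zmod_cast, ZMod.intCast_zmod_cast] at h
    rw [h]
  · intro y
    obtain ⟨i, hi⟩ : SameCycle σ (⟦y⟧ : Quotient (SameCycle.setoid σ)).out y :=
      Quotient.mk_out (s := SameCycle.setoid σ) y
    refine ⟨(⟦y⟧, i), ?_⟩
    conv_rhs => rw [← hi]
    rw [zpow_apply_eq_zpow_apply_iff (hσ _), ZMod.intCast_zmod_cast]

/-- `(q, k) ↦ σ ^ k q.out`: a point is its cycle together with its position relative to the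
chosen representative of that cycle. -/
def quotSameCycleProdZModEquiv (hσ : ∀ x, Function.minimalPeriod σ x = n) :
    Quotient (SameCycle.setoid σ) × ZMod n ≃ α :=
  Equiv.ofBijective _ (bijective_zpow_apply_out hσ)

theorem apply_quotSameCycleProdZModEquiv (hσ : ∀ x, Function.minimalPeriod σ x = n)
    (p : Quotient (SameCycle.setoid σ) × ZMod n) :
    σ (quotSameCycleProdZModEquiv hσ p) = quotSameCycleProdZModEquiv hσ (p.1, p.2 + 1) := by
  change σ ((σ ^ (p.2.cast : ℤ)) p.1.out) = (σ ^ ((p.2 + 1).cast : ℤ)) p.1.out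
  rw [← mul_apply, ← zpow_one_add, zpow_apply_eq_zpow_apply_iff (hσ _)]
  push_cast [ZMod.intCast_zmod_cast]
  ring

theorem exists_permCongr_eq_zmodShift [Finite α] {d : ℕ} (hn : n ≠ 0)
    (hcard : Nat.card α = d * n) (hσ : ∀ x, Function.minimalPeriod σ x = n) :
    ∃ f : α ≃ Fin d × ZMod n, f.permCongr σ = zmodShift (Fin d) n := by
  set E := quotSameCycleProdZModEquiv hσ
  have hd : Nat.card (Quotient (SameCycle.setoid σ)) = d := by
    have h := Nat.card_congr E
    rw [Nat.card_prod, Nat.card_zmod, hcard] at h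
    exact Nat.eq_of_mul_eq_mul_right (Nat.pos_of_ne_zero hn) h
  let f := (((Finite.equivFin _).trans (finCongr hd)).symm.prodCongr (Equiv.refl (ZMod n))).trans E
  refine ⟨f.symm, Equiv.ext fun p ↦ ?_⟩
  rw [permCongr_apply, symm_symm, symm_apply_eq]
  exact apply_quotSameCycleProdZModEquiv hσ _

end Equiv.Perm

section WreathProduct

variable (d n : ℕ)

/-- `(v, ρ)` acts by `(i, k) ↦ (ρ i, k + v (ρ i))`. -/
def wreathProductToPerm :
    WreathProduct (Multiplicative (ZMod n)) d →* Perm (Fin d × ZMod n) where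
  toFun g := prodShear g.right fun i ↦ Equiv.addRight (g.left (g.right i)).toAdd
  map_one' := by ext p <;> simp
  map_mul' a b := by
    ext p
    · rfl
    · have h x : permHom d _ a.right b.left x = b.left (a.right.symm x) := rfl
      simp only [SemidirectProduct.mul_right, SemidirectProduct.mul_left, mul_apply, Pi.mul_apply,
        h, symm_apply_apply, toAdd_mul, prodShear_apply, coe_addRight]
      abel

variable {d n}

@[simp]
theorem wreathProductToPerm_apply (g : WreathProduct (Multiplicative (ZMod n)) d)
    (p : Fin d × ZMod n) :
    wreathProductToPerm d n g p = (g.right p.1, p.2 + (g.left (g.right p.1)).toAdd) := rfl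

theorem wreathProductToPerm_injective : Function.Injective (wreathProductToPerm d n) := by
  rw [injective_iff_map_eq_one]
  intro g hg
  have h p := congr($hg p)
  simp only [wreathProductToPerm_apply, one_apply, Prod.ext_iff] at h
  have hright i : g.right i = i := (h (i, 0)).1
  refine SemidirectProduct.ext (funext fun i ↦ ?_) (Equiv.ext hright)
  simpa [hright] using (h (i, 0)).2

theorem range_wreathProductToPerm :
    (wreathProductToPerm d n).range = Subgroup.centralizer {zmodShift (Fin d) n} := by
  apply le_antisymm
  · rintro _ ⟨g, rfl⟩
    rw [Subgroup.mem_centralizer_singleton_iff]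
    ext p <;> simp [add_right_comm]
  · intro π hπ
    rw [Subgroup.mem_centralizer_singleton_iff] at hπ
    have hπ' := apply_eq_of_commute_zmodShift hπ
    set ρ : Fin d → Fin d := fun i ↦ (π (i, 0)).1
    set v : Fin d → ZMod n := fun i ↦ (π (i, 0)).2
    have hρ : Function.Injective ρ := fun i j hij ↦ by
      have : π (i, v j - v i) = π (j, 0) := by
        rw [hπ' i, hπ' j]
        exact Prod.ext hij (by simp [v])
      exact congr($(π.injective this).1)
    let ρ' := Equiv.ofBijective ρ (Finite.injective_iff_bijective.mp hρ)
    refine ⟨⟨fun j ↦ Multiplicative.ofAdd (v (ρ'.symm j)), ρ'⟩, Equiv.ext fun p ↦ ?_⟩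
    rw [wreathProductToPerm_apply, hπ' p.1 p.2]
    exact Prod.ext rfl (by simp [ρ', v, add_comm])

def wreathProductEquivCentralizer :
    WreathProduct (Multiplicative (ZMod n)) d ≃* Subgroup.centralizer {zmodShift (Fin d) n} :=
  (MonoidHom.ofInjective wreathProductToPerm_injective).trans
    (MulEquiv.subgroupCongr range_wreathProductToPerm)

end WreathProduct

theorem centralizer_of_isoTypic_perm_general (d e : ℕ) (he : 1 ≤ e)
    (α : Type) [Fintype α] (hcard : Fintype.card α = d * e)
    (sigma : Equiv.Perm α)
    (hper : ∀ x : α, Function.minimalPeriod (⇑sigma) x = e) :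
    Nonempty
      (Subgroup.centralizer ({sigma} : Set (Equiv.Perm α)) ≃*
        WreathProduct (Multiplicative (ZMod e)) d) := by
  obtain ⟨f, hf⟩ := exists_permCongr_eq_zmodShift (by omega)
    (Nat.card_eq_fintype_card.trans hcard) hper
  have hconj : f.permCongrHom sigma = zmodShift (Fin d) e := hf
  exact ⟨(f.permCongrHom.subgroupMap _).trans
    ((MulEquiv.subgroupCongr (by rw [Subgroup.map_centralizer_singleton, hconj])).trans
      wreathProductEquivCentralizer.symm)⟩

/-- If `α` has `d·e` elements and every point of `α` has minimal period
exactly `e` under the permutation `σ` (so `σ` is a product of `d` disjoint `e`-cycles),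
then the centralizer of `σ` in `Perm α` is isomorphic to the wreath product
`(ℤ/eℤ) ≀ Σ_d = (ℤ/eℤ)^d ⋊ Σ_d`. -/
theorem centralizer_of_isoTypic_perm (d e : ℕ) (hd : 1 ≤ d) (he : 1 ≤ e)
    (α : Type) [Fintype α] (hcard : Fintype.card α = d * e)
    (sigma : Equiv.Perm α)
    (hper : ∀ x : α, Function.minimalPeriod (⇑sigma) x = e) :
    Nonempty
      (Subgroup.centralizer ({sigma} : Set (Equiv.Perm α)) ≃*
        WreathProduct (Multiplicative (ZMod e)) d) :=
  centralizer_of_isoTypic_perm_general d e he α hcard sigma hper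

end
end

section
/- Let N ≥ 1 and k be integers, and let L be the subgroup of the topological abelian group ℤ × ℝ generated by (N, 0) and (k, 1). Then the group of continuous characters of the quotient topological group (ℤ × ℝ)/L — i.e., continuous group homomorphisms from (ℤ × ℝ)/L to the circle group ℝ/ℤ (equivalently, its Pontryagin dual) — is isomorphic to the quotient group (ℤ × ℤ)/⟨(N, k)⟩; explicitly, (m, n) ∈ ℤ × ℤ corresponds to the character induced by (a, t) ↦ (m a)/N + (n − k m/N) t mod ℤ, and this assignment is surjective with kernel generated by (N, k). -/
noncomputable section

/-- The subgroup `L` of `ℤ × ℝ` generated by `(N, 0)` and `(k, 1)`. -/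
def latticeL (N k : ℤ) : AddSubgroup (ℤ × ℝ) :=
  AddSubgroup.closure {((N : ℤ), (0 : ℝ)), ((k : ℤ), (1 : ℝ))}

/-- The quotient topological group `(ℤ × ℝ)/L`, i.e. `Λ_{ℤ/Nℤ}(k)`. -/
def LambdaZN (N k : ℤ) : Type := (ℤ × ℝ) ⧸ latticeL N k

instance (N k : ℤ) : AddCommGroup (LambdaZN N k) :=
  inferInstanceAs (AddCommGroup ((ℤ × ℝ) ⧸ latticeL N k))

instance (N k : ℤ) : TopologicalSpace (LambdaZN N k) :=
  inferInstanceAs (TopologicalSpace ((ℤ × ℝ) ⧸ latticeL N k))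

/-!
A continuous character of `ℝ` lifts through the covering `ℝ → ℝ/ℤ` to a continuous additive map
`ℝ → ℝ`, hence is `t ↦ α t`; so every continuous character of `ℤ × ℝ` is `(a, t) ↦ a r + α t`.
It factors through `(ℤ × ℝ)/L` iff `N r ∈ ℤ` and `k r + α ∈ ℤ`, i.e. iff
`(r, α) = (m/N, n - k m/N)` for integers `m, n`, and it is trivial iff `m/N ∈ ℤ` and
`n = k m/N`, i.e. iff `(m, n) ∈ ℤ (N, k)`.
-/

theorem AddCircle.exists_eq_coe_mul_of_continuous {p : ℝ} (φ : ℝ →+ AddCircle p)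
    (hφ : Continuous φ) : ∃ α : ℝ, ∀ t, φ t = ((α * t : ℝ) : AddCircle p) := by
  have cov := AddCircle.isCoveringMap_coe p
  obtain ⟨F, ⟨hF0, hFφ⟩, -⟩ := cov.existsUnique_continuousMap_lifts ⟨φ, hφ⟩ 0 0 (by simp)
  have hFφ' : ∀ t, ((F t : ℝ) : AddCircle p) = φ t := congr_fun hFφ
  -- `t ↦ F (s + t) - F s` lifts `t ↦ φ (s + t) - φ s = φ t` and vanishes at `0`, so it is `F`.
  have hadd : ∀ s t, F (s + t) = F s + F t := by
    intro s t
    have := cov.eq_of_comp_eq (g₁ := fun t => F (s + t) - F s) (g₂ := F) (by fun_prop)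
      F.continuous (funext fun u => by simp [hFφ', map_add]) 0 (by simp [hF0])
    linarith [congr_fun this t]
  refine ⟨F 1, fun t => ?_⟩
  have : F t = t * F 1 := by simpa using map_real_smul (AddMonoidHom.mk' F hadd) F.continuous t 1
  rw [← hFφ', this, mul_comm]

theorem AddCircle.coe_half_ne_zero : ((1 / 2 : ℝ) : AddCircle (1 : ℝ)) ≠ 0 := by
  rw [Ne, AddCircle.coe_eq_zero_iff]
  rintro ⟨n, hn⟩
  have h2 : (n : ℝ) * 2 = 1 := by simp at hn; linarith
  have : n * 2 = 1 := by exact_mod_cast h2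
  omega

def intRealChar (p r α : ℝ) : ContinuousAddMonoidHom (ℤ × ℝ) (AddCircle p) where
  toFun x := ((x.1 * r + α * x.2 : ℝ) : AddCircle p)
  map_zero' := by simp
  map_add' x y := by
    rw [← AddCircle.coe_add]
    congr 1
    simp only [Prod.fst_add, Prod.snd_add]
    push_cast
    ring
  continuous_toFun := by
    have : Continuous (fun a : ℤ => (a : ℝ)) := continuous_of_discreteTopology
    fun_prop

@[simp]
theorem intRealChar_apply (p r α : ℝ) (x : ℤ × ℝ) :
    intRealChar p r α x = ((x.1 * r + α * x.2 : ℝ) : AddCircle p) := rfl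

theorem exists_eq_intRealChar {p : ℝ} (ψ : ContinuousAddMonoidHom (ℤ × ℝ) (AddCircle p)) :
    ∃ r α : ℝ, ψ = intRealChar p r α := by
  obtain ⟨α, hα⟩ := AddCircle.exists_eq_coe_mul_of_continuous
    (ψ.toAddMonoidHom.comp (AddMonoidHom.inr ℤ ℝ))
    (ψ.continuous.comp (continuous_const.prodMk continuous_id))
  obtain ⟨r, hr⟩ := QuotientAddGroup.mk_surjective (ψ (1, 0))
  refine ⟨r, α, ContinuousAddMonoidHom.ext fun ⟨a, t⟩ => ?_⟩
  have hsplit : ((a, t) : ℤ × ℝ) = a • ((1, 0) : ℤ × ℝ) + (0, t) := by ext <;> simp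
  have h0t : ψ (0, t) = ((α * t : ℝ) : AddCircle p) := hα t
  show ψ (a, t) = ((a * r + α * t : ℝ) : AddCircle p)
  rw [hsplit, map_add, map_zsmul, ← hr, h0t, ← AddCircle.coe_zsmul,
    ← AddCircle.coe_add, zsmul_eq_mul]

theorem intRealChar_eq_zero_iff {r α : ℝ} :
    intRealChar 1 r α = 0 ↔ (∃ j : ℤ, r = j) ∧ α = 0 := by
  constructor
  · intro h
    have hr := DFunLike.congr_fun h (1, 0)
    simp only [intRealChar_apply, Int.cast_one, one_mul, mul_zero, add_zero] at hr
    refine ⟨?_, ?_⟩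
    · obtain ⟨j, hj⟩ := (AddCircle.coe_eq_zero_iff (1 : ℝ)).mp hr
      exact ⟨j, by simpa using hj.symm⟩
    · by_contra hα
      have := DFunLike.congr_fun h (0, 1 / (2 * α))
      simp only [intRealChar_apply, Int.cast_zero, zero_mul, zero_add] at this
      rw [show α * (1 / (2 * α)) = 1 / 2 by field_simp] at this
      exact AddCircle.coe_half_ne_zero this
  · rintro ⟨⟨j, rfl⟩, rfl⟩
    refine ContinuousAddMonoidHom.ext fun x => ?_
    show ((x.1 * j + 0 * x.2 : ℝ) : AddCircle (1 : ℝ)) = 0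
    rw [zero_mul, add_zero, AddCircle.coe_eq_zero_iff]
    exact ⟨x.1 * j, by simp⟩

namespace ContinuousAddMonoidHom

variable {G A : Type*} [AddGroup G] [TopologicalSpace G] [AddGroup A] [TopologicalSpace A]
  (H : AddSubgroup G) [H.Normal]

def liftQuotient (f : ContinuousAddMonoidHom G A) (hf : H ≤ f.toAddMonoidHom.ker) :
    ContinuousAddMonoidHom (G ⧸ H) A :=
  ⟨QuotientAddGroup.lift H f.toAddMonoidHom hf, continuous_quot_lift _ f.continuous⟩

@[simp]
theorem liftQuotient_mk (f : ContinuousAddMonoidHom G A) (hf : H ≤ f.toAddMonoidHom.ker) (x : G) :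
    f.liftQuotient H hf x = f x := rfl

theorem quotient_ext {f g : ContinuousAddMonoidHom (G ⧸ H) A} (h : ∀ x : G, f x = g x) :
    f = g :=
  ext fun y => QuotientAddGroup.induction_on y h

theorem liftQuotient_eq_zero_iff {f : ContinuousAddMonoidHom G A} (hf : H ≤ f.toAddMonoidHom.ker) :
    f.liftQuotient H hf = 0 ↔ f = 0 :=
  ⟨fun h => ext fun x => DFunLike.congr_fun h (x : G ⧸ H),
    fun h => quotient_ext H fun x => DFunLike.congr_fun h x⟩

end ContinuousAddMonoidHom

theorem latticeL_le_ker_intRealChar_iff {N k : ℤ} {r α : ℝ} :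
    latticeL N k ≤ (intRealChar 1 r α).toAddMonoidHom.ker ↔
      (∃ j : ℤ, N * r = j) ∧ ∃ n : ℤ, k * r + α = n := by
  rw [latticeL, AddSubgroup.closure_le, Set.insert_subset_iff, Set.singleton_subset_iff]
  change ((N * r + α * 0 : ℝ) : AddCircle (1 : ℝ)) = 0 ∧
    ((k * r + α * 1 : ℝ) : AddCircle (1 : ℝ)) = 0 ↔ _
  simp only [mul_zero, add_zero, mul_one]
  rw [AddCircle.coe_eq_zero_iff, AddCircle.coe_eq_zero_iff]
  simp only [zsmul_eq_mul, mul_one, eq_comm]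

namespace LambdaZN

open ContinuousAddMonoidHom

variable (N k : ℤ)

def char (m n : ℤ) : ContinuousAddMonoidHom ((ℤ × ℝ) ⧸ latticeL N k) (AddCircle (1 : ℝ)) :=
  (intRealChar 1 (m / N) (n - k * m / N)).liftQuotient (latticeL N k) <| by
    refine latticeL_le_ker_intRealChar_iff.mpr ⟨?_, n, by ring⟩
    rcases eq_or_ne N 0 with rfl | hN
    · exact ⟨0, by simp⟩
    · exact ⟨m, by field_simp⟩

def charHom : ℤ × ℤ →+ ContinuousAddMonoidHom ((ℤ × ℝ) ⧸ latticeL N k) (AddCircle (1 : ℝ)) where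
  toFun mn := char N k mn.1 mn.2
  map_zero' := quotient_ext _ fun x => by simp [char]
  map_add' mn mn' := quotient_ext _ fun x => by
    simp only [char, liftQuotient_mk, ContinuousAddMonoidHom.add_apply, intRealChar_apply,
      Prod.fst_add, Prod.snd_add, ← AddCircle.coe_add]
    congr 1
    push_cast
    ring

theorem charHom_apply_mk (m n a : ℤ) (t : ℝ) :
    charHom N k (m, n) (QuotientAddGroup.mk ((a, t) : ℤ × ℝ)) =
      (((m * a : ℝ) / N + (n - k * m / N) * t : ℝ) : AddCircle (1 : ℝ)) := by
  show ((a * (m / N) + (n - k * m / N) * t : ℝ) : AddCircle (1 : ℝ)) = _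
  ring_nf

theorem ker_charHom (hN : N ≠ 0) : (charHom N k).ker = AddSubgroup.zmultiples (N, k) := by
  ext ⟨m, n⟩
  change char N k m n = 0 ↔ _
  rw [char, liftQuotient_eq_zero_iff, intRealChar_eq_zero_iff, AddSubgroup.mem_zmultiples_iff]
  have hN' : (N : ℝ) ≠ 0 := by exact_mod_cast hN
  simp only [Prod.smul_mk, smul_eq_mul, Prod.mk.injEq, div_eq_iff hN']
  constructor
  · rintro ⟨⟨j, hj⟩, hn⟩
    have hm : m = j * N := by exact_mod_cast hj
    subst hm
    refine ⟨j, rfl, ?_⟩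
    push_cast at hn
    have : (n : ℝ) = j * k := by field_simp at hn; linarith
    exact_mod_cast this.symm
  · rintro ⟨j, rfl, rfl⟩
    refine ⟨⟨j, by push_cast; ring⟩, ?_⟩
    push_cast
    field_simp
    ring

theorem charHom_surjective (hN : N ≠ 0) : Function.Surjective (charHom N k) := by
  intro χ
  obtain ⟨r, α, hψ⟩ := exists_eq_intRealChar
    ⟨χ.toAddMonoidHom.comp (QuotientAddGroup.mk' (latticeL N k)),
      χ.continuous.comp continuous_quotient_mk'⟩
  have hL : latticeL N k ≤ (intRealChar 1 r α).toAddMonoidHom.ker := by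
    rw [← hψ]
    intro x hx
    simp [(QuotientAddGroup.eq_zero_iff x).mpr hx]
  obtain ⟨⟨j, hj⟩, z, hz⟩ := latticeL_le_ker_intRealChar_iff.mp hL
  refine ⟨(j, z), quotient_ext _ fun x => ?_⟩
  have : intRealChar 1 (j / N) (z - k * j / N) = intRealChar 1 r α := by
    rw [← hj, ← hz]
    congr 1 <;> field_simp
    ring
  show intRealChar 1 (j / N) (z - k * j / N) x = χ x
  rw [this, ← hψ]
  rfl

end LambdaZN

/-- The group of continuous characters of `(ℤ × ℝ)/⟨(N,0),(k,1)⟩`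
(valued in the circle `ℝ/ℤ`) is isomorphic to `(ℤ × ℤ)/⟨(N, k)⟩`: explicitly,
`(m, n)` corresponds to the character induced by `(a, t) ↦ ma/N + (n − km/N)t mod ℤ`,
and this assignment is surjective with kernel generated by `(N, k)`. -/
theorem characters_of_LambdaZN (N k : ℤ) (hN : 1 ≤ N) :
    ∃ Phi : ℤ × ℤ →+ ContinuousAddMonoidHom (LambdaZN N k) (AddCircle (1 : ℝ)),
      (∀ (m n a : ℤ) (t : ℝ),
        Phi (m, n) (QuotientAddGroup.mk ((a, t) : ℤ × ℝ)) =
          ((((m : ℝ) * (a : ℝ)) / (N : ℝ) +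
            ((n : ℝ) - (k : ℝ) * (m : ℝ) / (N : ℝ)) * t : ℝ) : AddCircle (1 : ℝ))) ∧
      Function.Surjective Phi ∧
      Phi.ker = AddSubgroup.zmultiples ((N, k) : ℤ × ℤ) ∧
      Nonempty (((ℤ × ℤ) ⧸ AddSubgroup.zmultiples ((N, k) : ℤ × ℤ)) ≃+
        ContinuousAddMonoidHom (LambdaZN N k) (AddCircle (1 : ℝ))) := by
  have hN0 : N ≠ 0 := by omega
  have hsurj := LambdaZN.charHom_surjective N k hN0
  have hker := LambdaZN.ker_charHom N k hN0
  refine ⟨LambdaZN.charHom N k, LambdaZN.charHom_apply_mk N k, hsurj, hker, ⟨?_⟩⟩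
  exact (QuotientAddGroup.quotientAddEquivOfEq hker).symm.trans
    (QuotientAddGroup.quotientKerEquivOfSurjective _ hsurj)

end
end
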